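/- arXiv:2205.12792 — 8 statements merged into one kernel-verified Lean document; each statement's English description precedes it below -/
import Mathlib

section
/- Let n, l be integers and let h be a homogeneous polynomial of degree n in ℂ[x,y] (with respect to total degree). If h is divisible by (x+y)^l and len(h) < l, then h = 0, where len(h) is the number of lattice points on the Newton segment of h minus one. -/
open MvPolynomial

noncomputable section

abbrev R2 : Type := MvPolynomial (Fin 2) ℂ

/-- The (0,1)-homogeneous component of `f` of degree `j` (terms with y-exponent `j`). -/
def comp01 (f : R2) (j : ℕ) : R2 :=
  ∑ d ∈ f.support.filter (fun d => d 1 = j), MvPolynomial.monomial d (f.coeff d)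

/-- The total-degree (i.e. (1,1)-)homogeneous component of `f` of degree `j`. -/
def comp11 (f : R2) (j : ℕ) : R2 :=
  ∑ d ∈ f.support.filter (fun d => d 0 + d 1 = j), MvPolynomial.monomial d (f.coeff d)

/-- The exponent vector of a monomial, as a point of `ℝ²`. -/
def toR2pt (d : Fin 2 →₀ ℕ) : ℝ × ℝ := ((d 0 : ℝ), (d 1 : ℝ))

/-- The support of `f`, as a subset of `ℝ²`. -/
def suppSet (f : R2) : Set (ℝ × ℝ) := toR2pt '' (f.support : Set (Fin 2 →₀ ℕ))

/-- The augmented Newton polygon `N⁰(f)`: convex hull of the support together with the origin. -/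
def newton0 (f : R2) : Set (ℝ × ℝ) := convexHull ℝ (insert (0, 0) (suppSet f))

/-- The trapezoid `T_{m,n}` with vertices `(0,0), (m+n,0), (m,n), (0,n)`. -/
def Tset (m n : ℝ) : Set (ℝ × ℝ) := {p | 0 ≤ p.2 ∧ p.2 ≤ n ∧ 0 ≤ p.1 ∧ p.1 ≤ m + n - p.2}

/-- The region `𝒩'' = T_{m/a, n/a} + ((a-1)/a)·(m,n)`. -/
def NsetPP (m n a : ℕ) : Set (ℝ × ℝ) :=
  (fun p : ℝ × ℝ => (p.1 + ((a : ℝ) - 1) * m / a, p.2 + ((a : ℝ) - 1) * n / a)) ''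
    Tset ((m : ℝ) / a) ((n : ℝ) / a)

/-- The Jacobian determinant `[f,g] = f_x g_y - f_y g_x`. -/
def jacDet (f g : R2) : R2 :=
  pderiv 0 f * pderiv 1 g - pderiv 1 f * pderiv 0 g

/-- auxiliary: the one-variable specialization -/
def sp (h : R2) : Polynomial ℂ := MvPolynomial.aeval ![Polynomial.X, 1] h

lemma sp_coeff (h : R2) (k : ℕ) :
    (sp h).coeff k = ∑ d ∈ h.support, if d 0 = k then h.coeff d else 0 := by
  unfold sp
  conv_lhs => rw [h.as_sum]
  rw [map_sum, Polynomial.finset_sum_coeff]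
  refine Finset.sum_congr rfl fun d hd => ?_
  rw [MvPolynomial.aeval_monomial, Finsupp.prod_pow]
  rw [Fin.prod_univ_two]
  simp only [Matrix.cons_val_zero, Matrix.cons_val_one, Matrix.head_cons, one_pow, mul_one]
  rw [Polynomial.algebraMap_eq, Polynomial.coeff_C_mul, Polynomial.coeff_X_pow]
  split <;> simp_all [eq_comm]

/-- a (1,1)-homogeneous polynomial of degree `n` divisible by `(x+y)^l`
whose Newton-segment length is `< l` must vanish. -/
theorem stmt1 (n l : ℕ) (h : R2)
    (hhom : ∀ d ∈ h.support, d 0 + d 1 = n)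
    (hdvd : (X 0 + X 1 : R2) ^ l ∣ h)
    (hlen : ∀ d ∈ h.support, ∀ d' ∈ h.support, ((d 0 : ℤ) - (d' 0 : ℤ)) < l) :
    h = 0 := by
  by_contra hne
  -- homogeneity: d 0 determines d on support
  have huniq : ∀ d ∈ h.support, ∀ d' ∈ h.support, d 0 = d' 0 → d = d' := by
    intro d hd d' hd' h0
    have h1 := hhom d hd
    have h2 := hhom d' hd'
    ext i
    fin_cases i
    · exact h0
    · show d 1 = d' 1
      omega
  set p := sp h with hp
  have hpne : p ≠ 0 := by
    obtain ⟨d, hd⟩ := (MvPolynomial.ne_zero_iff.mp hne)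
    have hds : d ∈ h.support := MvPolynomial.mem_support_iff.mpr hd
    have : p.coeff (d 0) = h.coeff d := by
      rw [hp, sp_coeff]
      rw [Finset.sum_eq_single d]
      · simp
      · intro d' hd' hne'
        split
        · exact absurd (huniq d' hd' d hds (by assumption)) hne'
        · rfl
      · intro hnd; exact absurd hds hnd
    intro hz
    rw [hz, Polynomial.coeff_zero] at this
    exact hd this.symm
  have hmem : ∀ k, p.coeff k ≠ 0 → ∃ d ∈ h.support, d 0 = k := by
    intro k hk
    rw [hp, sp_coeff] at hk
    by_contra hcon
    push_neg at hcon
    apply hk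
    refine Finset.sum_eq_zero fun d hd => ?_
    simp [hcon d hd]
  -- divisibility
  have hdvdp : (Polynomial.X + 1 : Polynomial ℂ) ^ l ∣ p := by
    obtain ⟨q, hq⟩ := hdvd
    refine ⟨MvPolynomial.aeval ![Polynomial.X, 1] q, ?_⟩
    rw [hp]; unfold sp
    rw [hq, map_mul, map_pow, map_add, aeval_X, aeval_X]
    simp
  set b := p.natTrailingDegree with hb
  set m := p.natDegree with hm
  have hble : b ≤ m := Polynomial.natTrailingDegree_le_natDegree p
  obtain ⟨dM, hdM, hdM0⟩ := hmem m (Polynomial.leadingCoeff_ne_zero.mpr hpne)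
  obtain ⟨dB, hdB, hdB0⟩ := hmem b (Polynomial.trailingCoeff_nonzero_iff_nonzero.mpr hpne)
  have hml : m - b < l := by
    have := hlen dM hdM dB hdB
    omega
  -- factor out X^b
  obtain ⟨r, hr⟩ := Polynomial.X_pow_dvd_iff.mpr
    (fun d hd => Polynomial.coeff_eq_zero_of_lt_natTrailingDegree hd : ∀ d < b, p.coeff d = 0)
  have hrne : r ≠ 0 := by rintro rfl; simp at hr; exact hpne hr
  have hdegr : r.natDegree = m - b := by
    have : p.natDegree = b + r.natDegree := by
      rw [hr, Polynomial.natDegree_mul (pow_ne_zero _ Polynomial.X_ne_zero) hrne, Polynomial.natDegree_X_pow]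
    omega
  have hcop : IsCoprime ((Polynomial.X + 1 : Polynomial ℂ) ^ l) ((Polynomial.X : Polynomial ℂ) ^ b) := by
    refine IsCoprime.pow ?_
    exact ⟨1, -1, by ring⟩
  have hdvdr : (Polynomial.X + 1 : Polynomial ℂ) ^ l ∣ r :=
    hcop.dvd_of_dvd_mul_left (hr ▸ hdvdp)
  have := Polynomial.natDegree_le_of_dvd hdvdr hrne
  rw [Polynomial.natDegree_pow, hdegr] at this
  have : l * (Polynomial.X + 1 : Polynomial ℂ).natDegree ≤ m - b := this
  rw [show ((Polynomial.X + 1 : Polynomial ℂ)) = Polynomial.X + Polynomial.C 1 by simp,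
    Polynomial.natDegree_X_add_C, mul_one] at this
  omega
end
end

section
/- Let m, n, a be positive integers with a ≥ 2, a | m, a | n, m < n, and set ε = 1/(m(n−m)). Then there is no integer i such that both ⌊i(n−m)ε⌋ > ⌊(i−1)(n−m)ε⌋ and ⌊(i+1)mε⌋ > ⌊imε⌋. -/
lemma jump_iff_dvd (m k : ℤ) (hm : 0 < m) : (k - 1) / m < k / m ↔ m ∣ k := by
  have hk : k - 1 = (k % m - 1) + m * (k / m) := by
    have := Int.emod_add_mul_ediv k m; linarith
  have hdiv : (k - 1) / m = (k % m - 1) / m + k / m := by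
    rw [hk, Int.add_mul_ediv_left _ _ hm.ne']
  constructor
  · intro h
    by_contra hd
    have h0 : k % m ≠ 0 := fun h0 => hd (Int.dvd_of_emod_eq_zero h0)
    have h1 : 0 < k % m := lt_of_le_of_ne (Int.emod_nonneg k hm.ne') (Ne.symm h0)
    have h2 : k % m < m := Int.emod_lt_of_pos k hm
    have : (k % m - 1) / m = 0 := Int.ediv_eq_zero_of_lt (by omega) (by omega)
    omega
  · rintro ⟨q, rfl⟩
    have hk1 : m * q - 1 = (m - 1) + m * (q - 1) := by ring
    have : (m * q - 1) / m = (m - 1) / m + (q - 1) := by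
      rw [hk1, Int.add_mul_ediv_left _ _ hm.ne']
    have hz : (m - 1) / m = 0 := Int.ediv_eq_zero_of_lt (by omega) (by omega)
    have hq : m * q / m = q := Int.mul_ediv_cancel_left q hm.ne'
    omega

/-- with `ε = 1/(m(n-m))`, no integer `i` has both
`⌊i(n-m)ε⌋ > ⌊(i-1)(n-m)ε⌋` and `⌊(i+1)mε⌋ > ⌊imε⌋`. -/
theorem stmt3 (m n a : ℕ) (hm : 0 < m) (hn : 0 < n) (ha : 2 ≤ a)
    (h1 : a ∣ m) (h2 : a ∣ n) (hmn : m < n) :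
    ¬ ∃ i : ℤ,
      (⌊((i : ℚ) - 1) * ((n : ℚ) - m) * (1 / ((m : ℚ) * ((n : ℚ) - m)))⌋ <
        ⌊(i : ℚ) * ((n : ℚ) - m) * (1 / ((m : ℚ) * ((n : ℚ) - m)))⌋) ∧
      (⌊(i : ℚ) * (m : ℚ) * (1 / ((m : ℚ) * ((n : ℚ) - m)))⌋ <
        ⌊((i : ℚ) + 1) * (m : ℚ) * (1 / ((m : ℚ) * ((n : ℚ) - m)))⌋) := by
  rintro ⟨i, hA, hB⟩
  set d : ℕ := n - m with hd
  have hdpos : 0 < d := Nat.sub_pos_of_lt hmn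
  have hcast : ((n : ℚ) - m) = (d : ℚ) := by
    rw [hd, Nat.cast_sub hmn.le]
  have hm0 : (m : ℚ) ≠ 0 := by positivity
  have hd0 : (d : ℚ) ≠ 0 := by positivity
  rw [hcast] at hA hB
  have eA1 : ((i : ℚ) - 1) * (d : ℚ) * (1 / ((m : ℚ) * (d : ℚ))) = ((i - 1 : ℤ) : ℚ) / (m : ℚ) := by
    push_cast; field_simp
  have eA2 : (i : ℚ) * (d : ℚ) * (1 / ((m : ℚ) * (d : ℚ))) = ((i : ℤ) : ℚ) / (m : ℚ) := by
    field_simp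
  have eB1 : (i : ℚ) * (m : ℚ) * (1 / ((m : ℚ) * (d : ℚ))) = ((i : ℤ) : ℚ) / (d : ℚ) := by
    field_simp
  have eB2 : ((i : ℚ) + 1) * (m : ℚ) * (1 / ((m : ℚ) * (d : ℚ))) = ((i + 1 : ℤ) : ℚ) / (d : ℚ) := by
    push_cast; field_simp
  rw [eA1, eA2, Rat.floor_intCast_div_natCast, Rat.floor_intCast_div_natCast] at hA
  rw [eB1, eB2, Rat.floor_intCast_div_natCast, Rat.floor_intCast_div_natCast] at hB
  have hmdvd : (m : ℤ) ∣ i := (jump_iff_dvd (m : ℤ) i (by exact_mod_cast hm)).1 hA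
  have hddvd : (d : ℤ) ∣ (i + 1) := by
    have := (jump_iff_dvd (d : ℤ) (i + 1) (by exact_mod_cast hdpos)).1 (by simpa using hB)
    exact this
  have had : a ∣ d := Nat.dvd_sub h2 h1
  have h3 : (a : ℤ) ∣ i := dvd_trans (Int.natCast_dvd_natCast.2 h1) hmdvd
  have h4 : (a : ℤ) ∣ (i + 1) := dvd_trans (Int.natCast_dvd_natCast.2 had) hddvd
  have h5 : (a : ℤ) ∣ 1 := by
    have := dvd_sub h4 h3
    simpa using this
  have h6 : (a : ℤ) ≤ 1 := Int.le_of_dvd one_pos h5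
  have : (2 : ℤ) ≤ a := by exact_mod_cast ha
  omega
end

section
/- Define a_i = ⌊(i+1)mε⌋ and b_i = ⌊(i+1)mε⌋ + ⌊i(n−m)ε⌋ where ε = 1/(m(n−m)), m, n positive integers with m < n, both divisible by some a ≥ 2. Then for every positive integer i, the difference (a_i, b_i) − (a_{i−1}, b_{i−1}) belongs to {(0,0), (0,1), (1,1)}. -/
/-
Since `ε = 1/(m(n-m))`, the two floors are `a_i = ⌊(i+1)/(n-m)⌋` and `b_i - a_i = ⌊i/m⌋`.
A floor `⌊k/d⌋` grows by one from `k-1` to `k` exactly when `d ∣ k`, so `a_i` jumps iff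
`n - m ∣ i + 1` and `b_i - a_i` jumps iff `m ∣ i`. Both cannot happen at once: `a` would
divide the consecutive numbers `i` and `i + 1`.
-/

/-- `a_i = ⌊(i+1)mε⌋` with `ε = 1/(m(n-m))`. -/
def aSeq (m n : ℕ) (i : ℕ) : ℤ :=
  ⌊((i : ℚ) + 1) * (m : ℚ) * (1 / ((m : ℚ) * ((n : ℚ) - m)))⌋

/-- `b_i = a_i + ⌊i(n-m)ε⌋`. -/
def bSeq (m n : ℕ) (i : ℕ) : ℤ :=
  aSeq m n i + ⌊(i : ℚ) * ((n : ℚ) - m) * (1 / ((m : ℚ) * ((n : ℚ) - m)))⌋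

lemma Nat.cast_succ_div_sub_cast_div (k d : ℕ) :
    (((k + 1) / d : ℕ) : ℤ) - ((k / d : ℕ) : ℤ) = if d ∣ k + 1 then 1 else 0 := by
  rw [Nat.succ_div]
  split_ifs <;> push_cast <;> ring

lemma Nat.not_dvd_and_dvd_succ {a d e k : ℕ} (ha : a ≠ 1) (hd : a ∣ d) (he : a ∣ e) :
    ¬ (d ∣ k ∧ e ∣ k + 1) := by
  rintro ⟨hdk, hek⟩
  have hak : a ∣ k + 1 - k := Nat.dvd_sub (he.trans hek) (hd.trans hdk)
  exact ha (Nat.dvd_one.mp (by simpa using hak))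

section

variable {m n : ℕ} (hm : 0 < m) (hmn : m < n)
include hm hmn

lemma aSeq_eq_div (i : ℕ) : aSeq m n i = ((i + 1) / (n - m) : ℕ) := by
  have hm0 : (m : ℚ) ≠ 0 := by positivity
  have hnm : (((n - m : ℕ) : ℚ)) = (n : ℚ) - m := Nat.cast_sub hmn.le
  have hnm0 : (n : ℚ) - m ≠ 0 := by rw [← hnm]; exact_mod_cast (Nat.sub_pos_of_lt hmn).ne'
  have hq : ((i : ℚ) + 1) * m * (1 / (m * ((n : ℚ) - m)))
      = ((i + 1 : ℕ) : ℚ) / ((n - m : ℕ) : ℚ) := by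
    rw [hnm]; field_simp; push_cast; ring
  rw [aSeq, hq, Rat.floor_natCast_div_natCast, Int.natCast_ediv]

lemma bSeq_sub_aSeq_eq_div (i : ℕ) : bSeq m n i - aSeq m n i = (i / m : ℕ) := by
  have hm0 : (m : ℚ) ≠ 0 := by positivity
  have hnm0 : (n : ℚ) - m ≠ 0 := sub_ne_zero.mpr (by exact_mod_cast hmn.ne')
  have hq : (i : ℚ) * ((n : ℚ) - m) * (1 / (m * ((n : ℚ) - m))) = (i : ℚ) / (m : ℚ) := by
    field_simp
  rw [bSeq, add_sub_cancel_left, hq, Rat.floor_natCast_div_natCast, Int.natCast_ediv]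

end

/-- `(a_i, b_i) - (a_{i-1}, b_{i-1}) ∈ {(0,0), (0,1), (1,1)}`. -/
theorem stmt4 (m n a : ℕ) (hm : 0 < m) (hmn : m < n) (ha : 2 ≤ a)
    (h1 : a ∣ m) (h2 : a ∣ n) (i : ℕ) (hi : 0 < i) :
    (aSeq m n i - aSeq m n (i - 1), bSeq m n i - bSeq m n (i - 1)) ∈
      ({(0, 0), (0, 1), (1, 1)} : Set (ℤ × ℤ)) := by
  obtain ⟨k, rfl⟩ : ∃ k, i = k + 1 := ⟨i - 1, by omega⟩
  have hjump_a : aSeq m n (k + 1) - aSeq m n k = if n - m ∣ k + 2 then 1 else 0 := by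
    rw [aSeq_eq_div hm hmn, aSeq_eq_div hm hmn, Nat.cast_succ_div_sub_cast_div]
  have hjump_b : (bSeq m n (k + 1) - aSeq m n (k + 1)) - (bSeq m n k - aSeq m n k)
      = if m ∣ k + 1 then 1 else 0 := by
    rw [bSeq_sub_aSeq_eq_div hm hmn, bSeq_sub_aSeq_eq_div hm hmn,
      Nat.cast_succ_div_sub_cast_div]
  have hnot_both : ¬ (m ∣ k + 1 ∧ n - m ∣ k + 1 + 1) :=
    Nat.not_dvd_and_dvd_succ (by omega) h1 (Nat.dvd_sub h2 h1)
  have hb : bSeq m n (k + 1) - bSeq m n k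
      = (aSeq m n (k + 1) - aSeq m n k) + (if m ∣ k + 1 then 1 else 0) := by
    rw [← hjump_b]; ring
  rw [Nat.add_sub_cancel, hb, hjump_a]
  split_ifs <;> simp_all
end

section
/- Let E ∈ ℂ[x,y] be nonconstant and let α(z) = z^k + e_{k−2}z^{k−2} + ... + e_0 be a Tschirnhausen polynomial of degree k ≥ 1. Then the Newton polygon satisfies N⁰(α(E)) = k · N⁰(E), where N⁰(f) denotes the convex hull of supp(f) ∪ {(0,0)} and k·S denotes the dilation of S by factor k. -/
/-!
Write `N = N⁰(E)` and `k = deg α`. Each exponent of `α(E) = ∑ αᵢ Eⁱ` is a sum of `i ≤ k`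
exponents of `E`, so it lies in `i • N ⊆ k • N` since `N` is convex and contains `0`.
Conversely, a vertex `v ≠ 0` of `N` is the exponent `d` of a monomial of `E` at which some
linear functional `L` is strictly maximised over `N`. Then `k • d` has `L`-value too large
to occur in `Eⁱ` for `i < k`, and in `E^k` it arises only as `d + ⋯ + d`, so the coefficient
of `k • d` in `α(E)` is `(E_d)^k ≠ 0`. Thus `k • v` is an exponent of `α(E)`, and since `N` is
the convex hull of its vertices, `k • N ⊆ N⁰(α(E))`.
-/

open MvPolynomial

noncomputable section

open Pointwise

lemma Convex.smul_subset_smul_of_zero_mem {𝕜 E : Type*} [Field 𝕜] [LinearOrder 𝕜]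
    [IsStrictOrderedRing 𝕜] [AddCommGroup E] [Module 𝕜 E] {s : Set E} (hs : Convex 𝕜 s)
    (h0 : (0 : E) ∈ s) {a b : 𝕜} (ha : 0 ≤ a) (hab : a ≤ b) : a • s ⊆ b • s := by
  rw [← add_sub_cancel a b, hs.add_smul ha (sub_nonneg.2 hab)]
  exact Set.subset_add_left _ (Set.zero_mem_smul_set h0)

lemma exists_forall_lt_of_mem_extremePoints_convexHull {E : Type*} [TopologicalSpace E]
    [AddCommGroup E] [IsTopologicalAddGroup E] [Module ℝ E] [ContinuousSMul ℝ E]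
    [LocallyConvexSpace ℝ E] [T2Space E] {B : Set E} (hB : B.Finite) {x : E}
    (hx : x ∈ (convexHull ℝ B).extremePoints ℝ) :
    ∃ L : StrongDual ℝ E, ∀ b ∈ B, b ≠ x → L b < L x := by
  have hx' : x ∉ convexHull ℝ (B \ {x}) := fun h =>
    ((convex_convexHull ℝ B).mem_extremePoints_iff_mem_sdiff_convexHull_sdiff.1 hx).2
      (convexHull_mono (Set.sdiff_subset_sdiff_left (subset_convexHull ℝ B)) h)
  obtain ⟨L, u, hL, hu⟩ := geometric_hahn_banach_closed_point (convex_convexHull ℝ _)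
    (hB.sdiff.isCompact_convexHull ℝ).isClosed hx'
  exact ⟨L, fun b hb hbx => (hL b (subset_convexHull ℝ _ ⟨hb, hbx⟩)).trans hu⟩

lemma MvPolynomial.weight_le_of_forall_lt {σ R Γ : Type*} [CommSemiring R] [Preorder Γ]
    {w : (σ →₀ ℕ) → Γ} {f : MvPolynomial σ R} {d : σ →₀ ℕ}
    (hd : ∀ e ∈ f.support, e ≠ d → w e < w d) : ∀ e ∈ f.support, w e ≤ w d := fun e he => by
  rcases eq_or_ne e d with rfl | hed
  exacts [le_rfl, (hd e he hed).le]

section Weight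

variable {σ R Γ : Type*} [CommSemiring R] [AddCommMonoid Γ] [LinearOrder Γ]
  [IsOrderedCancelAddMonoid Γ] (w : (σ →₀ ℕ) →+ Γ) {f : MvPolynomial σ R} {d : σ →₀ ℕ}

lemma MvPolynomial.weight_le_of_mem_support_pow {c : Γ} (hf : ∀ e ∈ f.support, w e ≤ c)
    (i : ℕ) : ∀ a ∈ (f ^ i).support, w a ≤ i • c := by
  classical
  induction i with
  | zero =>
    intro a ha
    rw [pow_zero, mem_support_iff, coeff_one] at ha
    simp [(ite_ne_right_iff.1 ha).1.symm]
  | succ i ih =>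
    intro a ha
    rw [pow_succ] at ha
    obtain ⟨b, hb, c, hc, rfl⟩ := Finset.mem_add.1 (support_mul _ _ ha)
    rw [map_add, succ_nsmul]
    exact add_le_add (ih b hb) (hf c hc)

lemma MvPolynomial.coeff_nsmul_pow_of_forall_lt (hd : ∀ e ∈ f.support, e ≠ d → w e < w d)
    (i : ℕ) : coeff (i • d) (f ^ i) = coeff d f ^ i := by
  classical
  have hle := weight_le_of_forall_lt hd
  induction i with
  | zero => simp
  | succ i ih =>
    have hmem : (i • d, d) ∈ Finset.HasAntidiagonal.antidiagonal ((i + 1) • d) := by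
      rw [Finset.HasAntidiagonal.mem_antidiagonal, succ_nsmul]
    rw [pow_succ, coeff_mul, Finset.sum_eq_single_of_mem _ hmem, ih, pow_succ]
    rintro ⟨b, c⟩ hbc hne
    rw [Finset.HasAntidiagonal.mem_antidiagonal] at hbc
    dsimp only at hbc ⊢
    by_contra h
    have hb : b ∈ (f ^ i).support := mem_support_iff.2 (left_ne_zero_of_mul h)
    have hc : c ∈ f.support := mem_support_iff.2 (right_ne_zero_of_mul h)
    have hcd : c ≠ d := by
      rintro rfl
      rw [add_right_cancel (hbc.trans (succ_nsmul c i))] at hne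
      exact hne rfl
    have := add_lt_add_of_le_of_lt (weight_le_of_mem_support_pow w hle i b hb) (hd c hc hcd)
    rw [← map_add, hbc, map_nsmul, ← succ_nsmul] at this
    exact this.false

lemma MvPolynomial.coeff_nsmul_pow_eq_zero_of_lt (hd : ∀ e ∈ f.support, w e ≤ w d)
    (hd0 : 0 < w d) {i k : ℕ} (hik : i < k) : coeff (k • d) (f ^ i) = 0 := by
  by_contra h
  have := weight_le_of_mem_support_pow w hd i _ (mem_support_iff.2 h)
  rw [map_nsmul] at this
  exact (nsmul_lt_nsmul_left hd0 hik).not_ge this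

lemma MvPolynomial.coeff_nsmul_aeval_of_monic {α : Polynomial R} (hα : α.Monic)
    (hd : ∀ e ∈ f.support, e ≠ d → w e < w d) (hd0 : 0 < w d) :
    coeff (α.natDegree • d) (Polynomial.aeval f α) = coeff d f ^ α.natDegree := by
  rw [Polynomial.aeval_eq_sum_range, coeff_sum,
    Finset.sum_eq_single_of_mem _ (Finset.self_mem_range_succ _), coeff_smul,
    coeff_nsmul_pow_of_forall_lt w hd, hα.coeff_natDegree, one_smul]
  intro i hi hne
  rw [coeff_smul, coeff_nsmul_pow_eq_zero_of_lt w (weight_le_of_forall_lt hd) hd0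
    (lt_of_le_of_ne (Finset.mem_range_succ_iff.1 hi) hne), smul_zero]

end Weight

lemma toR2pt_zero : toR2pt 0 = 0 := by
  simp [toR2pt]

lemma toR2pt_add (a b : Fin 2 →₀ ℕ) : toR2pt (a + b) = toR2pt a + toR2pt b := by
  simp [toR2pt]

def toR2ptHom : (Fin 2 →₀ ℕ) →+ ℝ × ℝ where
  toFun := toR2pt
  map_zero' := toR2pt_zero
  map_add' := toR2pt_add

@[simp] lemma toR2ptHom_apply (d : Fin 2 →₀ ℕ) : toR2ptHom d = toR2pt d := rfl

lemma toR2pt_injective : Function.Injective toR2pt := by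
  intro a b h
  simp only [toR2pt, Prod.ext_iff, Nat.cast_inj] at h
  ext i
  fin_cases i
  exacts [h.1, h.2]

lemma toR2pt_nsmul (n : ℕ) (d : Fin 2 →₀ ℕ) : toR2pt (n • d) = (n : ℝ) • toR2pt d := by
  rw [Nat.cast_smul_eq_nsmul]
  exact map_nsmul toR2ptHom n d

lemma suppSet_finite (f : R2) : (suppSet f).Finite :=
  f.support.finite_toSet.image _

lemma convex_newton0 (f : R2) : Convex ℝ (newton0 f) :=
  convex_convexHull ℝ _

lemma zero_mem_newton0 (f : R2) : (0 : ℝ × ℝ) ∈ newton0 f :=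
  subset_convexHull ℝ _ (Set.mem_insert_iff.2 (Or.inl rfl))

lemma toR2pt_mem_newton0 {f : R2} {d : Fin 2 →₀ ℕ} (hd : d ∈ f.support) :
    toR2pt d ∈ newton0 f :=
  subset_convexHull ℝ _ (Set.mem_insert_of_mem _ ⟨d, hd, rfl⟩)

lemma toR2pt_mem_smul_newton0_of_mem_support_pow (f : R2) (i : ℕ) {a : Fin 2 →₀ ℕ}
    (ha : a ∈ (f ^ i).support) : toR2pt a ∈ (i : ℝ) • newton0 f := by
  classical
  induction i generalizing a with
  | zero =>
    rw [pow_zero, support_one, Finset.mem_singleton] at ha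
    subst ha
    exact ⟨0, zero_mem_newton0 f, by simp [toR2pt_zero]⟩
  | succ i ih =>
    rw [pow_succ] at ha
    obtain ⟨b, hb, c, hc, rfl⟩ := Finset.mem_add.1 (support_mul _ _ ha)
    rw [toR2pt_add, Nat.cast_succ, (convex_newton0 f).add_smul i.cast_nonneg zero_le_one, one_smul]
    exact Set.add_mem_add (ih hb) (toR2pt_mem_newton0 hc)

lemma exists_le_natDegree_mem_support_pow_of_mem_support_aeval (f : R2) (α : Polynomial ℂ)
    {a : Fin 2 →₀ ℕ} (ha : a ∈ (Polynomial.aeval f α).support) :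
    ∃ i ≤ α.natDegree, a ∈ (f ^ i).support := by
  rw [Polynomial.aeval_eq_sum_range, mem_support_iff, coeff_sum] at ha
  obtain ⟨i, hi, hne⟩ := Finset.exists_ne_zero_of_sum_ne_zero ha
  rw [coeff_smul] at hne
  exact ⟨i, Finset.mem_range_succ_iff.1 hi, mem_support_iff.2 (right_ne_zero_of_smul hne)⟩

lemma convexHull_extremePoints_newton0 (f : R2) :
    convexHull ℝ ((newton0 f).extremePoints ℝ) = newton0 f := by
  have hfin : (insert (0, 0) (suppSet f)).Finite := (suppSet_finite f).insert _
  have hclosed : IsClosed (convexHull ℝ ((newton0 f).extremePoints ℝ)) :=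
    ((hfin.subset extremePoints_convexHull_subset).isCompact_convexHull ℝ).isClosed
  rw [← hclosed.closure_eq]
  exact closure_convexHull_extremePoints (hfin.isCompact_convexHull ℝ) (convex_newton0 f)

lemma newton0_aeval_subset (f : R2) (α : Polynomial ℂ) :
    newton0 (Polynomial.aeval f α) ⊆ (α.natDegree : ℝ) • newton0 f := by
  refine convexHull_min ?_ ((convex_newton0 f).smul _)
  rintro _ (rfl | ⟨a, ha, rfl⟩)
  · exact Set.zero_mem_smul_set (zero_mem_newton0 f)
  · obtain ⟨i, hi, hai⟩ := exists_le_natDegree_mem_support_pow_of_mem_support_aeval f α ha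
    exact (convex_newton0 f).smul_subset_smul_of_zero_mem (zero_mem_newton0 f) i.cast_nonneg
      (Nat.cast_le.2 hi) (toR2pt_mem_smul_newton0_of_mem_support_pow f i hai)

lemma smul_mem_suppSet_aeval_of_mem_extremePoints {f : R2} {α : Polynomial ℂ} (hα : α.Monic)
    {v : ℝ × ℝ} (hv : v ∈ (newton0 f).extremePoints ℝ) (hv0 : v ≠ 0) :
    (α.natDegree : ℝ) • v ∈ suppSet (Polynomial.aeval f α) := by
  obtain ⟨L, hL⟩ :=
    exists_forall_lt_of_mem_extremePoints_convexHull ((suppSet_finite f).insert _) hv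
  obtain ⟨d, hd, rfl⟩ : v ∈ suppSet f :=
    (Set.mem_insert_iff.1 (extremePoints_convexHull_subset hv)).resolve_left hv0
  let w : (Fin 2 →₀ ℕ) →+ ℝ := (L : ℝ × ℝ →+ ℝ).comp toR2ptHom
  have hmax : ∀ e ∈ f.support, e ≠ d → w e < w d := fun e he hed =>
    hL _ (Set.mem_insert_of_mem _ ⟨e, he, rfl⟩) (toR2pt_injective.ne hed)
  have hpos : 0 < w d := by
    simpa [w] using hL 0 (Set.mem_insert _ _) (Ne.symm hv0)
  refine ⟨α.natDegree • d, mem_support_iff.2 ?_, toR2pt_nsmul _ _⟩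
  rw [coeff_nsmul_aeval_of_monic w hα hmax hpos]
  exact pow_ne_zero _ (mem_support_iff.1 hd)

lemma smul_newton0_subset_newton0_aeval (f : R2) {α : Polynomial ℂ} (hα : α.Monic) :
    (α.natDegree : ℝ) • newton0 f ⊆ newton0 (Polynomial.aeval f α) := by
  rw [← convexHull_extremePoints_newton0, ← convexHull_smul]
  refine convexHull_mono ?_
  rintro _ ⟨v, hv, rfl⟩
  by_cases hv0 : v = 0
  · simp only [hv0, smul_zero]
    exact Set.mem_insert_iff.2 (Or.inl rfl)
  · exact Set.mem_insert_of_mem _ (smul_mem_suppSet_aeval_of_mem_extremePoints hα hv hv0)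

theorem newton0_aeval_of_monic (f : R2) {α : Polynomial ℂ} (hα : α.Monic) :
    newton0 (Polynomial.aeval f α) = (α.natDegree : ℝ) • newton0 f :=
  (newton0_aeval_subset f α).antisymm (smul_newton0_subset_newton0_aeval f hα)

theorem stmt8_general (E : R2) (k : ℕ)
    (α : Polynomial ℂ) (hmon : α.Monic) (hdeg : α.natDegree = k) :
    newton0 (Polynomial.aeval E α) = (fun p : ℝ × ℝ => (k : ℝ) • p) '' newton0 E := by
  rw [Set.image_smul, ← hdeg]
  exact newton0_aeval_of_monic E hmon

/-- for nonconstant `E` and a Tschirnhausen polynomial `α` of degree `k ≥ 1`,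
`N⁰(α(E)) = k · N⁰(E)`. -/
theorem stmt8 (E : R2) (hE : ∀ c : ℂ, E ≠ MvPolynomial.C c) (k : ℕ) (hk : 1 ≤ k)
    (α : Polynomial ℂ) (hmon : α.Monic) (hdeg : α.natDegree = k)
    (hcoeff : α.coeff (k - 1) = 0) :
    newton0 (Polynomial.aeval E α) = (fun p : ℝ × ℝ => (k : ℝ) • p) '' newton0 E :=
  stmt8_general E k α hmon hdeg
end
end

section
/- Let m < n be positive integers and F ∈ ℂ[x,y] with Newton polygon N⁰(F) contained in the trapezoid T_{m,n} = {(x,y) : 0 ≤ y ≤ n, 0 ≤ x ≤ m + n − y}. Then the following are equivalent: (a) for all 0 ≤ i ≤ m, the (0,1)-homogeneous component F^{(0,1)}_{n−i} is divisible by (x+1)^{m−i}; (b) the polynomial F_{zy}(z,y) := F(z−1, y) has support contained in the quadrilateral T¹_{m,n} with vertices (0,0), (m+n,0), (m,n), (0,n−m). -/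
open MvPolynomial

noncomputable section

lemma coeff_comp01 (f : R2) (j : ℕ) (e : Fin 2 →₀ ℕ) :
    coeff e (comp01 f j) = if e 1 = j then coeff e f else 0 := by
  unfold comp01
  rw [MvPolynomial.coeff_sum]
  simp only [coeff_monomial]
  rw [Finset.sum_ite_eq' ]
  simp only [Finset.mem_filter, mem_support_iff]
  by_cases h : e 1 = j
  · simp [h]
    tauto
  · simp [h]

lemma mem_support_comp01 {f : R2} {j : ℕ} {e : Fin 2 →₀ ℕ}
    (he : e ∈ (comp01 f j).support) : e ∈ f.support ∧ e 1 = j := by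
  rw [mem_support_iff, coeff_comp01] at he
  by_cases h : e 1 = j
  · simp [h] at he; exact ⟨mem_support_iff.2 he, h⟩
  · simp [h] at he

lemma comp01_sum_eq {f : R2} {n : ℕ} (h : ∀ d ∈ f.support, d 1 ≤ n) :
    ∑ j ∈ Finset.range (n + 1), comp01 f j = f := by
  ext e
  rw [MvPolynomial.coeff_sum]
  simp only [coeff_comp01]
  rw [Finset.sum_ite_eq (Finset.range (n+1)) (e 1) (fun _ => coeff e f)]
  by_cases he : e 1 ≤ n
  · simp [Finset.mem_range, Nat.lt_succ_iff, he]
  · simp only [Finset.mem_range, Nat.lt_succ_iff, he, if_false]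
    by_contra hc
    exact he (h e (mem_support_iff.2 fun h0 => hc h0.symm))

lemma comp01_finsum (s : Finset ℕ) (f : ℕ → R2) (j : ℕ) :
    comp01 (∑ x ∈ s, f x) j = ∑ x ∈ s, comp01 (f x) j := by
  ext e
  rw [MvPolynomial.coeff_sum]
  simp only [coeff_comp01, MvPolynomial.coeff_sum]
  by_cases h : e 1 = j <;> simp [h]

lemma comp01_of_pure {f : R2} {j j' : ℕ} (h : ∀ d ∈ f.support, d 1 = j') :
    comp01 f j = if j' = j then f else 0 := by
  ext e
  rw [coeff_comp01]
  by_cases h1 : e 1 = j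
  · by_cases h2 : j' = j
    · simp [h1, h2]
    · simp only [h1, if_true, h2, if_false, coeff_zero]
      by_contra hc
      exact h2 ((h e (mem_support_iff.2 hc)).symm.trans h1)
  · by_cases h2 : j' = j
    · simp only [h1, if_false, h2, if_true]
      by_contra hc
      exact h1 ((h e (mem_support_iff.2 fun h0 => hc h0.symm)).trans h2)
    · simp [h1, h2]

lemma support_shift_pow (c : ℂ) (k : ℕ) :
    ∀ e ∈ ((X 0 + C c : R2) ^ k).support, e 1 = 0 ∧ e 0 ≤ k := by
  induction k with
  | zero =>
      intro e he
      simp only [pow_zero] at he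
      rw [← C_1, C_apply] at he
      have h0 := MvPolynomial.support_monomial_subset he
      simp only [Finset.mem_singleton] at h0
      subst h0
      simp
  | succ k ih =>
      intro e he
      rw [pow_succ] at he
      have h2 := MvPolynomial.support_mul _ _ he
      rw [Finset.mem_add] at h2
      obtain ⟨u, hu, v, hv, rfl⟩ := h2
      have hu' := ih u hu
      have hv' : v 1 = 0 ∧ v 0 ≤ 1 := by
        have := MvPolynomial.support_add hv
        rw [Finset.mem_union] at this
        rcases this with h | h
        · rw [MvPolynomial.support_X] at h
          simp only [Finset.mem_singleton] at h
          subst h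
          simp [Finsupp.single_apply]
        · rw [C_apply] at h
          have h0 := MvPolynomial.support_monomial_subset h
          simp only [Finset.mem_singleton] at h0
          subst h0
          simp
      constructor
      · simp [Finsupp.add_apply, hu'.1, hv'.1]
      · simp only [Finsupp.add_apply]
        omega

lemma support_shift (c : ℂ) (f : R2) :
    ∀ e ∈ ((MvPolynomial.aeval (![X 0 + C c, X 1] : Fin 2 → R2)) f).support,
      ∃ d ∈ f.support, e 1 = d 1 ∧ e 0 ≤ d 0 := by
  intro e he
  conv at he => rw [f.as_sum, map_sum]
  have := MvPolynomial.support_sum he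
  rw [Finset.mem_biUnion] at this
  obtain ⟨d, hd, he2⟩ := this
  refine ⟨d, hd, ?_⟩
  rw [aeval_monomial, Finsupp.prod_pow] at he2
  have hprod : (∏ i : Fin 2, (![X 0 + C c, X 1] : Fin 2 → R2) i ^ d i)
      = (X 0 + C c : R2) ^ d 0 * (X 1 : R2) ^ d 1 := by
    rw [Fin.prod_univ_two]
    simp
  rw [hprod, ← mul_assoc] at he2
  have h2 := MvPolynomial.support_mul _ _ he2
  rw [Finset.mem_add] at h2
  obtain ⟨u, hu, v, hv, rfl⟩ := h2
  have h3 := MvPolynomial.support_mul _ _ hu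
  rw [Finset.mem_add] at h3
  obtain ⟨a, ha, b, hb, rfl⟩ := h3
  have haz : a = 0 := by
    have : (algebraMap ℂ R2) (coeff d f) = C (coeff d f) := rfl
    rw [this, C_apply] at ha
    have h0 := MvPolynomial.support_monomial_subset ha
    simpa using h0
  subst haz
  have hb' := support_shift_pow c (d 0) b hb
  have hv' : v = Finsupp.single 1 (d 1) := by
    rw [MvPolynomial.X_pow_eq_monomial] at hv
    have h0 := MvPolynomial.support_monomial_subset hv
    simpa using h0
  subst hv'
  constructor
  · simp [Finsupp.add_apply, hb'.1, Finsupp.single_apply]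
  · simp only [Finsupp.add_apply, Finsupp.zero_apply, Finsupp.single_apply]
    simpa using hb'.2

lemma X0_pow_dvd_iff (k : ℕ) (g : R2) :
    (X 0 : R2) ^ k ∣ g ↔ ∀ e ∈ g.support, k ≤ e 0 := by
  constructor
  · rintro ⟨h, rfl⟩ e he
    rw [mem_support_iff, MvPolynomial.X_pow_eq_monomial, coeff_monomial_mul'] at he
    by_cases hle : Finsupp.single 0 k ≤ e
    · exact (Finsupp.single_le_iff).1 hle
    · simp [hle] at he
  · intro h
    refine ⟨∑ e ∈ g.support, monomial (e - Finsupp.single 0 k) (coeff e g), ?_⟩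
    rw [MvPolynomial.X_pow_eq_monomial, Finset.mul_sum]
    conv_lhs => rw [g.as_sum]
    refine Finset.sum_congr rfl fun e he => ?_
    rw [monomial_mul, one_mul]
    congr 1
    have hle : Finsupp.single 0 k ≤ e := Finsupp.single_le_iff.2 (h e he)
    rw [add_tsub_cancel_of_le hle]

lemma tau_sigma (f : R2) :
    (MvPolynomial.aeval (![X 0 + 1, X 1] : Fin 2 → R2))
      ((MvPolynomial.aeval (![X 0 - 1, X 1] : Fin 2 → R2)) f) = f := by
  have h : (MvPolynomial.aeval (![X 0 + 1, X 1] : Fin 2 → R2)).comp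
      (MvPolynomial.aeval (![X 0 - 1, X 1] : Fin 2 → R2)) = AlgHom.id ℂ R2 := by
    apply MvPolynomial.algHom_ext
    intro i
    fin_cases i <;> simp
  have h2 := DFunLike.congr_fun h f
  simpa using h2

lemma dvd_transfer (k : ℕ) (f : R2) :
    (X 0 + 1 : R2) ^ k ∣ f ↔
      (X 0 : R2) ^ k ∣ (MvPolynomial.aeval (![X 0 - 1, X 1] : Fin 2 → R2)) f := by
  constructor
  · intro h
    have := map_dvd (MvPolynomial.aeval (![X 0 - 1, X 1] : Fin 2 → R2)) h
    rwa [map_pow, map_add, aeval_X, map_one, Matrix.cons_val_zero, sub_add_cancel] at this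
  · intro h
    have := map_dvd (MvPolynomial.aeval (![X 0 + 1, X 1] : Fin 2 → R2)) h
    rwa [map_pow, aeval_X, Matrix.cons_val_zero, tau_sigma] at this

lemma support_shift' (f : R2) :
    ∀ e ∈ ((MvPolynomial.aeval (![X 0 - 1, X 1] : Fin 2 → R2)) f).support,
      ∃ d ∈ f.support, e 1 = d 1 ∧ e 0 ≤ d 0 := by
  have hvec : (![X 0 - 1, X 1] : Fin 2 → R2) = ![X 0 + C (-1), X 1] := by
    funext i
    fin_cases i <;> simp [sub_eq_add_neg]
  rw [hvec]
  exact support_shift (-1) f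


/-- with `supp(F) ⊆ T_{m,n}`, the divisibility conditions
`(x+1)^{m-i} ∣ F^{(0,1)}_{n-i}` for `0 ≤ i ≤ m` are equivalent to the support of
`F(z-1, y)` lying in the quadrilateral `T¹_{m,n}`. -/
theorem stmt9 (m n : ℕ) (hm : 0 < m) (hmn : m < n) (F : R2)
    (hsupp : ∀ d ∈ F.support, d 1 ≤ n ∧ d 0 + d 1 ≤ m + n) :
    (∀ i ≤ m, (X 0 + 1 : R2) ^ (m - i) ∣ comp01 F (n - i)) ↔
      (∀ d ∈ (MvPolynomial.aeval (![X 0 - 1, X 1] : Fin 2 → R2) F).support,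
        d 1 ≤ n ∧ d 0 + d 1 ≤ m + n ∧ (d 1 : ℤ) - n + m ≤ (d 0 : ℤ)) := by
  have hFsum : F = ∑ j ∈ Finset.range (n + 1), comp01 F j :=
    (comp01_sum_eq (fun d hd => (hsupp d hd).1)).symm
  have hGsum : (MvPolynomial.aeval (![X 0 - 1, X 1] : Fin 2 → R2)) F
      = ∑ j ∈ Finset.range (n + 1),
        (MvPolynomial.aeval (![X 0 - 1, X 1] : Fin 2 → R2)) (comp01 F j) := by
    conv_lhs => rw [hFsum]
    rw [map_sum]
  have hpureS : ∀ j : ℕ,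
      ∀ e ∈ ((MvPolynomial.aeval (![X 0 - 1, X 1] : Fin 2 → R2)) (comp01 F j)).support,
        e 1 = j := by
    intro j e he
    obtain ⟨d, hd, h1, _⟩ := support_shift' (comp01 F j) e he
    rw [h1, (mem_support_comp01 hd).2]
  have hcomp : ∀ j ∈ Finset.range (n + 1),
      comp01 ((MvPolynomial.aeval (![X 0 - 1, X 1] : Fin 2 → R2)) F) j
        = (MvPolynomial.aeval (![X 0 - 1, X 1] : Fin 2 → R2)) (comp01 F j) := by
    intro j hj
    rw [hGsum, comp01_finsum]
    rw [Finset.sum_eq_single_of_mem j hj]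
    · rw [comp01_of_pure (hpureS j), if_pos rfl]
    · intro j' hj' hne
      rw [comp01_of_pure (hpureS j'), if_neg hne]
  constructor
  · intro hdvd e he
    rw [hGsum] at he
    obtain ⟨j, hj, he2⟩ := Finset.mem_biUnion.1 (MvPolynomial.support_sum he)
    obtain ⟨d, hd, h1, h0⟩ := support_shift' (comp01 F j) e he2
    have hdF := mem_support_comp01 hd
    have hd1 : d 1 = j := hdF.2
    have hs := hsupp d hdF.1
    refine ⟨by omega, by omega, ?_⟩
    by_cases hcase : j + m ≤ n
    · omega
    · have hdv := hdvd (n - j) (by omega)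
      have hnj : n - (n - j) = j := by omega
      rw [hnj, dvd_transfer] at hdv
      have h5 := (X0_pow_dvd_iff _ _).1 hdv e he2
      omega
  · intro hsup i hi
    have hin : i ≤ n := le_of_lt (lt_of_le_of_lt hi hmn)
    rw [dvd_transfer, X0_pow_dvd_iff]
    intro e he
    rw [← hcomp (n - i) (by simp)] at he
    have h2 := mem_support_comp01 he
    have h3 := (hsup e h2.1).2.2
    have h4 : e 1 = n - i := h2.2
    omega
end
end

section
/- Let m < n be positive integers and F ∈ ℂ[x,y] with N⁰(F) ⊆ T_{m,n}. Then the following are equivalent: (a) for all 0 ≤ i ≤ n, the total-degree homogeneous component F^{(1,1)}_{m+n−i} is divisible by (x+y)^{n−i}; (b) the polynomial F_{xw}(x,w) := F(x, w−x) has support contained in the rectangle [0,m] × [0,n]. -/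
open MvPolynomial

noncomputable section

/-!
The substitution `y ↦ w - x` is a degree-preserving automorphism of `ℂ[x, y]` sending `x + y`
to `w`. Hence `(x + y) ^ (k - m)` divides the degree-`k` component `F_k` iff every monomial
`x^a w^b` of `(F_k)_{xw} = (F_{xw})_k` has `b ≥ k - m`, i.e. `a ≤ m`. The bound `b ≤ n` is
automatic, because the substitution does not raise the degree in the second variable.
-/

theorem forall_pow_sub_dvd_iff {M : Type*} [MonoidWithZero M] (a : M) {f : ℕ → M} {m n : ℕ}
    (hf : ∀ k, m + n < k → f k = 0) :
    (∀ i ≤ n, a ^ (n - i) ∣ f (m + n - i)) ↔ ∀ k, a ^ (k - m) ∣ f k := by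
  constructor
  · intro h k
    by_cases hkm : k ≤ m
    · simp [Nat.sub_eq_zero_of_le hkm]
    by_cases hk : k ≤ m + n
    · simpa [show n - (m + n - k) = k - m by omega, show m + n - (m + n - k) = k by omega]
        using h (m + n - k) (by omega)
    · simp [hf k (by omega)]
  · intro h i _
    simpa [show m + n - i - m = n - i by omega] using h (m + n - i)

namespace MvPolynomial

variable {σ R : Type*}

theorem X_pow_dvd_iff [CommSemiring R] {i : σ} {n : ℕ} {p : MvPolynomial σ R} :
    X i ^ n ∣ p ↔ ∀ d : σ →₀ ℕ, d i < n → coeff d p = 0 := by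
  rw [X_pow_eq_monomial, monomial_one_dvd_iff_modMonomial_eq_zero, MvPolynomial.ext_iff]
  refine forall_congr' fun d => ?_
  by_cases h : Finsupp.single i n ≤ d
  · simp [coeff_modMonomial_of_le _ h, Finsupp.single_le_iff.mp h]
  · simp [coeff_modMonomial_of_not_le _ h, not_le.mp (mt Finsupp.single_le_iff.mpr h)]

theorem degree_fin_two (d : Fin 2 →₀ ℕ) : d.degree = d 0 + d 1 := by
  rw [Finsupp.degree_eq_sum, Fin.sum_univ_two]

section Shear

variable [CommRing R]

/-- `shear F` is `F_{xw}`, i.e. `F(x, w - x)`. -/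
def shear : MvPolynomial (Fin 2) R ≃ₐ[R] MvPolynomial (Fin 2) R :=
  AlgEquiv.ofAlgHom (aeval ![X 0, X 1 - X 0]) (aeval ![X 0, X 0 + X 1])
    (by ext i : 1; fin_cases i <;> simp) (by ext i : 1; fin_cases i <;> simp)

theorem shear_apply (p : MvPolynomial (Fin 2) R) : shear p = aeval ![X 0, X 1 - X 0] p := rfl

@[simp]
theorem shear_X_zero : shear (X 0 : MvPolynomial (Fin 2) R) = X 0 := by simp [shear_apply]

@[simp]
theorem shear_X_one : shear (X 1 : MvPolynomial (Fin 2) R) = X 1 - X 0 := by simp [shear_apply]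

theorem shear_X_add_X : shear (X 0 + X 1 : MvPolynomial (Fin 2) R) = X 1 := by simp

theorem IsHomogeneous.shear {p : MvPolynomial (Fin 2) R} {k : ℕ} (hp : p.IsHomogeneous k) :
    (MvPolynomial.shear p).IsHomogeneous k := by
  have hX : ∀ i, (![X 0, X 1 - X 0] i : MvPolynomial (Fin 2) R).IsHomogeneous 1 := by
    intro i
    fin_cases i
    · exact isHomogeneous_X R 0
    · exact (isHomogeneous_X R 1).sub (isHomogeneous_X R 0)
  simpa [shear_apply] using hp.aeval _ hX

theorem shear_homogeneousComponent (k : ℕ) (p : MvPolynomial (Fin 2) R) :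
    shear (homogeneousComponent k p) = homogeneousComponent k (shear p) := by
  conv_rhs => rw [← sum_homogeneousComponent p, map_sum, map_sum]
  simp only [homogeneousComponent_of_mem
    ((homogeneousComponent_isHomogeneous _ p).shear), Finset.sum_ite_eq, Finset.mem_range]
  split_ifs with hk
  · rfl
  · rw [homogeneousComponent_eq_zero _ _ (by omega), map_zero]

theorem degreeOf_shear_monomial_le (e : Fin 2 →₀ ℕ) (c : R) :
    degreeOf 1 (shear (monomial e c)) ≤ e 1 := by
  have hX1 : degreeOf 1 (X 1 - X 0 : MvPolynomial (Fin 2) R) ≤ 1 :=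
    (degreeOf_sub_le _ _ _).trans <| max_le
      (by simpa using degreeOf_mul_X_self (R := R) 1 1) (by simp [degreeOf_X_of_ne])
  rw [monomial_eq, Finsupp.prod_fintype _ _ (fun _ => pow_zero _), Fin.prod_univ_two]
  rw [map_mul, map_mul, map_pow, map_pow, shear_X_zero, shear_X_one, shear_apply (C c), aeval_C,
    algebraMap_eq]
  calc degreeOf 1 (C c * (X 0 ^ e 0 * (X 1 - X 0) ^ e 1))
      ≤ degreeOf 1 (X 0 ^ e 0 : MvPolynomial (Fin 2) R) + degreeOf 1 ((X 1 - X 0) ^ e 1) :=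
        (degreeOf_C_mul_le _ _ _).trans (degreeOf_mul_le _ _ _)
    _ ≤ 0 + e 1 * 1 := by
        gcongr
        · simp [degreeOf_X_pow_of_ne]
        · exact (degreeOf_pow_le _ _ _).trans (Nat.mul_le_mul_left _ hX1)
    _ = e 1 := by ring

theorem degreeOf_shear_le (p : MvPolynomial (Fin 2) R) :
    degreeOf 1 (shear p) ≤ degreeOf 1 p := by
  conv_lhs => rw [p.as_sum, map_sum]
  exact (degreeOf_sum_le _ _ _).trans <| Finset.sup_le fun e he =>
    (degreeOf_shear_monomial_le e _).trans (monomial_le_degreeOf 1 he)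

theorem X_add_X_pow_dvd_homogeneousComponent_iff (p : MvPolynomial (Fin 2) R) (k m : ℕ) :
    (X 0 + X 1) ^ (k - m) ∣ homogeneousComponent k p ↔
      ∀ d ∈ (shear p).support, d 0 + d 1 = k → d 0 ≤ m := by
  rw [← map_dvd_iff shear, map_pow, shear_X_add_X, shear_homogeneousComponent, X_pow_dvd_iff]
  refine forall_congr' fun d => ?_
  rw [coeff_homogeneousComponent, degree_fin_two, mem_support_iff]
  split_ifs with hd
  · have hlt : d 1 < k - m ↔ ¬d 0 ≤ m := by omega
    rw [hlt]
    tauto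
  · simp [hd]

end Shear

end MvPolynomial

open MvPolynomial

theorem comp11_eq_homogeneousComponent (f : R2) (k : ℕ) :
    comp11 f k = homogeneousComponent k f := by
  simp only [comp11, homogeneousComponent_apply, degree_fin_two]

theorem stmt10_general (m n : ℕ) (F : R2)
    (hsupp : ∀ d ∈ F.support, d 1 ≤ n ∧ d 0 + d 1 ≤ m + n) :
    (∀ i ≤ n, (X 0 + X 1 : R2) ^ (n - i) ∣ comp11 F (m + n - i)) ↔
      (∀ d ∈ (MvPolynomial.aeval (![X 0, X 1 - X 0] : Fin 2 → R2) F).support,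
        d 0 ≤ m ∧ d 1 ≤ n) := by
  have hvanish : ∀ k, m + n < k → homogeneousComponent k F = 0 := fun k hk =>
    homogeneousComponent_eq_zero' _ _ fun d hd => by
      have := (hsupp d hd).2
      rw [degree_fin_two]
      omega
  have hdegreeOf : degreeOf 1 F ≤ n := degreeOf_le_iff.mpr fun d hd => (hsupp d hd).1
  simp only [comp11_eq_homogeneousComponent, ← shear_apply]
  rw [forall_pow_sub_dvd_iff _ hvanish]
  simp only [X_add_X_pow_dvd_homogeneousComponent_iff]
  refine ⟨fun h d hd => ⟨h _ d hd rfl, ?_⟩, fun h k d hd _ => (h d hd).1⟩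
  exact (monomial_le_degreeOf 1 hd).trans ((degreeOf_shear_le F).trans hdegreeOf)

/-- with `supp(F) ⊆ T_{m,n}`, the divisibility conditions
`(x+y)^{n-i} ∣ F^{(1,1)}_{m+n-i}` for `0 ≤ i ≤ n` are equivalent to the support of
`F(x, w-x)` lying in the rectangle `[0,m] × [0,n]`. -/
theorem stmt10 (m n : ℕ) (hm : 0 < m) (hmn : m < n) (F : R2)
    (hsupp : ∀ d ∈ F.support, d 1 ≤ n ∧ d 0 + d 1 ≤ m + n) :
    (∀ i ≤ n, (X 0 + X 1 : R2) ^ (n - i) ∣ comp11 F (m + n - i)) ↔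
      (∀ d ∈ (MvPolynomial.aeval (![X 0, X 1 - X 0] : Fin 2 → R2) F).support,
        d 0 ≤ m ∧ d 1 ≤ n) :=
  stmt10_general m n F hsupp
end
end

section
/- Let m < n be positive integers and F ∈ ℂ[x,y]. Suppose supp(F(z−1, w+1−z)) ⊆ T³_{m,n}, the trapezoid with vertices (0,0), (m,0), (m,n), (0,n−m). Then N⁰(F) ⊆ T_{m,n}, and for all 0 ≤ i ≤ m the component F^{(0,1)}_{n−i} is divisible by (x+1)^{m−i}, and for all 0 ≤ i ≤ n the component F^{(1,1)}_{m+n−i} is divisible by (x+y)^{n−i}. -/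
open MvPolynomial

noncomputable section

/- ### Auxiliary lemmas -/

lemma weight01 (d : Fin 2 →₀ ℕ) : Finsupp.weight (![0,1] : Fin 2 → ℕ) d = d 1 := by
  rw [Finsupp.weight_apply, Finsupp.sum_fintype _ _ (by intro i; simp), Fin.sum_univ_two]
  simp

lemma weight11 (d : Fin 2 →₀ ℕ) : Finsupp.weight (![1,1] : Fin 2 → ℕ) d = d 0 + d 1 := by
  rw [Finsupp.weight_apply, Finsupp.sum_fintype _ _ (by intro i; simp), Fin.sum_univ_two]
  simp

lemma wh_pow {w : Fin 2 → ℕ} {p : R2} {c : ℕ} (h : IsWeightedHomogeneous w p c) (k : ℕ) :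
    IsWeightedHomogeneous w (p ^ k) (k * c) := by
  induction k with
  | zero => simpa using isWeightedHomogeneous_one ℂ w
  | succ k ih => rw [pow_succ, Nat.succ_mul]; exact ih.mul h

lemma comp01_eq (f : R2) (j : ℕ) :
    comp01 f j = weightedHomogeneousComponent (![0,1] : Fin 2 → ℕ) j f := by
  rw [weightedHomogeneousComponent_apply, comp01]
  refine Finset.sum_congr ?_ (fun _ _ => rfl)
  exact Finset.filter_congr (fun d _ => by simp [weight01])

lemma comp11_eq (f : R2) (j : ℕ) :
    comp11 f j = weightedHomogeneousComponent (![1,1] : Fin 2 → ℕ) j f := by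
  rw [weightedHomogeneousComponent_apply, comp11]
  refine Finset.sum_congr ?_ (fun _ _ => rfl)
  exact Finset.filter_congr (fun d _ => by simp [weight11])

lemma whA (a b k : ℕ) (c : ℂ) :
    IsWeightedHomogeneous (![0,1] : Fin 2 → ℕ)
      (C c * (X 0 + 1 : R2) ^ a * (X 0 ^ k * X 1 ^ (b - k) * ((b.choose k : ℕ) : R2)))
      (b - k) := by
  have hX0 : IsWeightedHomogeneous (![0,1] : Fin 2 → ℕ) (X 0 : R2) 0 := by
    simpa using isWeightedHomogeneous_X ℂ (![0,1] : Fin 2 → ℕ) 0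
  have hX1 : IsWeightedHomogeneous (![0,1] : Fin 2 → ℕ) (X 1 : R2) 1 := by
    simpa using isWeightedHomogeneous_X ℂ (![0,1] : Fin 2 → ℕ) 1
  have h1 : IsWeightedHomogeneous (![0,1] : Fin 2 → ℕ) (1 : R2) 0 :=
    isWeightedHomogeneous_one ℂ _
  have hch : IsWeightedHomogeneous (![0,1] : Fin 2 → ℕ) (((b.choose k : ℕ) : R2)) 0 := by
    rw [← C_eq_coe_nat]; exact isWeightedHomogeneous_C _ _
  have := ((isWeightedHomogeneous_C (![0,1] : Fin 2 → ℕ) c).mul (wh_pow (hX0.add h1) a)).mul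
    (((wh_pow hX0 k).mul (wh_pow hX1 (b - k))).mul hch)
  simpa using this

lemma whB (a b k : ℕ) (c : ℂ) :
    IsWeightedHomogeneous (![1,1] : Fin 2 → ℕ)
      (C c * (X 0 ^ k * (1:R2) ^ (a - k) * ((a.choose k : ℕ) : R2)) * (X 0 + X 1 : R2) ^ b)
      (k + b) := by
  have hX0 : IsWeightedHomogeneous (![1,1] : Fin 2 → ℕ) (X 0 : R2) 1 := by
    simpa using isWeightedHomogeneous_X ℂ (![1,1] : Fin 2 → ℕ) 0
  have hX1 : IsWeightedHomogeneous (![1,1] : Fin 2 → ℕ) (X 1 : R2) 1 := by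
    simpa using isWeightedHomogeneous_X ℂ (![1,1] : Fin 2 → ℕ) 1
  have h1 : IsWeightedHomogeneous (![1,1] : Fin 2 → ℕ) (1 : R2) 0 :=
    isWeightedHomogeneous_one ℂ _
  have hch : IsWeightedHomogeneous (![1,1] : Fin 2 → ℕ) (((a.choose k : ℕ) : R2)) 0 := by
    rw [← C_eq_coe_nat]; exact isWeightedHomogeneous_C _ _
  have := ((isWeightedHomogeneous_C (![1,1] : Fin 2 → ℕ) c).mul
      (((wh_pow hX0 k).mul (wh_pow h1 (a - k))).mul hch)).mul
      (wh_pow (hX0.add hX1) b)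
  simpa using this

/-- if the support of `F(z-1, w+1-z)` lies in the trapezoid `T³_{m,n}`
(vertices `(0,0), (m,0), (m,n), (0,n-m)`), then `supp(F) ⊆ T_{m,n}` and both collections
of divisibility conditions hold. -/
theorem stmt11 (m n : ℕ) (hm : 0 < m) (hmn : m < n) (F : R2)
    (hsupp : ∀ d ∈ (MvPolynomial.aeval (![X 0 - 1, X 1 + 1 - X 0] : Fin 2 → R2) F).support,
      d 0 ≤ m ∧ (d 1 : ℤ) ≤ (d 0 : ℤ) + n - m) :
    (∀ d ∈ F.support, d 1 ≤ n ∧ d 0 + d 1 ≤ m + n) ∧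
      (∀ i ≤ m, (X 0 + 1 : R2) ^ (m - i) ∣ comp01 F (n - i)) ∧
      (∀ i ≤ n, (X 0 + X 1 : R2) ^ (n - i) ∣ comp11 F (m + n - i)) := by
  classical
  set G : R2 := MvPolynomial.aeval (![X 0 - 1, X 1 + 1 - X 0] : Fin 2 → R2) F with hGdef
  have hinv : MvPolynomial.aeval (![X 0 + 1, X 0 + X 1] : Fin 2 → R2) G = F := by
    rw [hGdef, ← AlgHom.comp_apply]
    have hcomp : (MvPolynomial.aeval (![X 0 + 1, X 0 + X 1] : Fin 2 → R2)).comp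
        (MvPolynomial.aeval (![X 0 - 1, X 1 + 1 - X 0] : Fin 2 → R2)) = AlgHom.id ℂ R2 := by
      apply MvPolynomial.algHom_ext
      intro i
      fin_cases i <;> simp <;> ring
    rw [hcomp, AlgHom.id_apply]
  have hF : F = ∑ d ∈ G.support,
      C (coeff d G) * (X 0 + 1 : R2) ^ d 0 * (X 0 + X 1 : R2) ^ d 1 := by
    conv_lhs => rw [← hinv]
    conv_lhs => rw [G.as_sum]
    rw [map_sum]
    refine Finset.sum_congr rfl fun d _ => ?_
    rw [aeval_monomial, Finsupp.prod_fintype _ _ (fun i => pow_zero _), Fin.prod_univ_two]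
    simp [algebraMap_eq, mul_assoc]
  -- expansion A : by powers of y
  have hFA : F = ∑ d ∈ G.support, ∑ k ∈ Finset.range (d 1 + 1),
      C (coeff d G) * (X 0 + 1 : R2) ^ d 0 *
        (X 0 ^ k * X 1 ^ (d 1 - k) * (((d 1).choose k : ℕ) : R2)) := by
    rw [hF]
    refine Finset.sum_congr rfl fun d _ => ?_
    rw [add_pow (X 0 : R2) (X 1) (d 1), Finset.mul_sum]
  -- expansion B : by total degree
  have hFB : F = ∑ d ∈ G.support, ∑ k ∈ Finset.range (d 0 + 1),
      C (coeff d G) * (X 0 ^ k * (1:R2) ^ (d 0 - k) * (((d 0).choose k : ℕ) : R2)) *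
        (X 0 + X 1 : R2) ^ d 1 := by
    rw [hF]
    refine Finset.sum_congr rfl fun d _ => ?_
    rw [add_pow (X 0 : R2) 1 (d 0), Finset.mul_sum, Finset.sum_mul]
  refine ⟨?_, ?_, ?_⟩
  · -- support bound
    intro d hd
    have h1 : coeff d F ≠ 0 := mem_support_iff.mp hd
    constructor
    · have h2 := h1
      rw [hFA] at h2
      simp only [coeff_sum] at h2
      obtain ⟨d', hd', h3⟩ := Finset.exists_ne_zero_of_sum_ne_zero h2
      obtain ⟨k, hk, h4⟩ := Finset.exists_ne_zero_of_sum_ne_zero h3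
      have hw := whA (d' 0) (d' 1) k (coeff d' G) h4
      rw [weight01] at hw
      have hs := hsupp d' hd'
      omega
    · have h2 := h1
      rw [hFB] at h2
      simp only [coeff_sum] at h2
      obtain ⟨d', hd', h3⟩ := Finset.exists_ne_zero_of_sum_ne_zero h2
      obtain ⟨k, hk, h4⟩ := Finset.exists_ne_zero_of_sum_ne_zero h3
      have hw := whB (d' 0) (d' 1) k (coeff d' G) h4
      rw [weight11] at hw
      have hs := hsupp d' hd'
      simp only [Finset.mem_range] at hk
      omega
  · -- divisibility by (X0+1)^(m-i)
    intro i hi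
    rw [comp01_eq, hFA, map_sum]
    refine Finset.dvd_sum fun d hd => ?_
    rw [map_sum]
    refine Finset.dvd_sum fun k hk => ?_
    rcases eq_or_ne (n - i) (d 1 - k) with he | hne
    · rw [he, (whA (d 0) (d 1) k (coeff d G)).weightedHomogeneousComponent_same]
      have hs := hsupp d hd
      simp only [Finset.mem_range] at hk
      have hge : m - i ≤ d 0 := by omega
      exact dvd_mul_of_dvd_left (Dvd.dvd.mul_left (pow_dvd_pow _ hge) _) _
    · rw [(whA (d 0) (d 1) k (coeff d G)).weightedHomogeneousComponent_ne _ hne]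
      exact dvd_zero _
  · -- divisibility by (X0+X1)^(n-i)
    intro i hi
    rw [comp11_eq, hFB, map_sum]
    refine Finset.dvd_sum fun d hd => ?_
    rw [map_sum]
    refine Finset.dvd_sum fun k hk => ?_
    rcases eq_or_ne (m + n - i) (k + d 1) with he | hne
    · rw [he, (whB (d 0) (d 1) k (coeff d G)).weightedHomogeneousComponent_same]
      have hs := hsupp d hd
      simp only [Finset.mem_range] at hk
      have hge : n - i ≤ d 1 := by omega
      exact Dvd.dvd.mul_left (pow_dvd_pow _ hge) _
    · rw [(whB (d 0) (d 1) k (coeff d G)).weightedHomogeneousComponent_ne _ hne]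
      exact dvd_zero _
end
end

section
/- Let m < n be positive integers divisible by a ≥ 2, ε = 1/(m(n−m)), and let i be an integer with m(n−m)(a−1)/a ≤ i ≤ m(n−m). Let F° ∈ ℂ[x,y] be a polynomial with supp(F°) ⊆ T_{m,n} and avoiding the region x ≥ m(a−1)/a, y ≥ n(a−1)/a. Suppose that for every j, the (0,1)-homogeneous component (F°)^{(0,1)}_j is divisible by (x+1)^{j−⌊i(n−m)ε⌋}. Then the (0,1)-degree of F° is strictly less than ⌊i(n−m)ε⌋ + m − m/a. -/
open MvPolynomial

noncomputable section

lemma key18 (F : R2) (j e : ℕ) (h : (MvPolynomial.X 0 + 1 : R2) ^ e ∣ comp01 F j)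
    (d : Fin 2 →₀ ℕ) (hd : d ∈ F.support) (hdj : d 1 = j) :
    ∃ d' ∈ F.support, d' 1 = j ∧ e ≤ d' 0 := by
  set φ : R2 →ₐ[ℂ] Polynomial ℂ :=
    MvPolynomial.aeval (fun v : Fin 2 => if v = 0 then (Polynomial.X : Polynomial ℂ) else 1)
    with hφ
  set q : Polynomial ℂ := φ (comp01 F j) with hq
  have hqsum : q = ∑ d' ∈ F.support.filter (fun d' => d' 1 = j),
      Polynomial.C (F.coeff d') * Polynomial.X ^ (d' 0) := by
    rw [hq, comp01, map_sum]
    refine Finset.sum_congr rfl fun d' _ => ?_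
    rw [hφ, MvPolynomial.aeval_monomial,
      Finsupp.prod_fintype _ _ (fun i => pow_zero _), Fin.prod_univ_two]
    rw [if_pos rfl, if_neg (by decide : ¬((1 : Fin 2) = 0)), one_pow, mul_one,
      Polynomial.C_eq_algebraMap]
  have hcoeff : ∀ r : ℕ, q.coeff r = ∑ d' ∈ F.support.filter (fun d' => d' 1 = j),
      (if d' 0 = r then F.coeff d' else 0) := by
    intro r
    rw [hqsum, Polynomial.finset_sum_coeff]
    refine Finset.sum_congr rfl fun d' _ => ?_
    simp [Polynomial.coeff_C_mul, Polynomial.coeff_X_pow, eq_comm]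
  have hdmem : d ∈ F.support.filter (fun d' => d' 1 = j) :=
    Finset.mem_filter.2 ⟨hd, hdj⟩
  have hq0 : q.coeff (d 0) = F.coeff d := by
    rw [hcoeff]
    rw [Finset.sum_eq_single_of_mem d hdmem]
    · simp
    · intro d' hd' hne
      rw [if_neg]
      intro h0
      apply hne
      have h1' : d' 1 = d 1 := by rw [(Finset.mem_filter.1 hd').2, hdj]
      ext v
      fin_cases v
      · exact h0
      · exact h1'
  have hqne : q ≠ 0 := by
    intro h0
    rw [h0, Polynomial.coeff_zero] at hq0
    exact (MvPolynomial.mem_support_iff.1 hd) hq0.symm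
  have hdvd' : (Polynomial.X + 1 : Polynomial ℂ) ^ e ∣ q := by
    have := map_dvd φ h
    simpa [hφ] using this
  have hx1 : (Polynomial.X + 1 : Polynomial ℂ).natDegree = 1 := by
    simpa using Polynomial.natDegree_X_add_C (1 : ℂ)
  have h1 : ((Polynomial.X + 1 : Polynomial ℂ) ^ e).natDegree = e := by
    rw [Polynomial.natDegree_pow, hx1, mul_one]
  have hdeg : e ≤ q.natDegree := h1 ▸ Polynomial.natDegree_le_of_dvd hdvd' hqne
  have hlead : q.coeff q.natDegree ≠ 0 := by
    rw [← Polynomial.leadingCoeff]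
    exact Polynomial.leadingCoeff_ne_zero.2 hqne
  rw [hcoeff] at hlead
  obtain ⟨d', hd'mem, hd'ne⟩ := Finset.exists_ne_zero_of_sum_ne_zero hlead
  have hd'0 : d' 0 = q.natDegree := by
    by_contra hc; rw [if_neg hc] at hd'ne; exact hd'ne rfl
  obtain ⟨hd'F, hd'j⟩ := Finset.mem_filter.1 hd'mem
  exact ⟨d', hd'F, hd'j, hd'0 ▸ hdeg⟩

/-- if `F°` is supported in `T_{m,n}` avoiding `𝒩''` and satisfies the
`i`-th collection of (0,1)-divisibility conditions for
`m(n-m)(a-1)/a ≤ i ≤ m(n-m)`, then its (0,1)-degree is `< ⌊i(n-m)ε⌋ + m - m/a`. -/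
theorem stmt18 (m n a : ℕ) (ha : 2 ≤ a) (hm : 0 < m) (hmn : m < n)
    (ham : a ∣ m) (han : a ∣ n) (i : ℕ)
    (hi1 : ((m * (n - m) * (a - 1) : ℕ) : ℚ) / a ≤ (i : ℚ)) (hi2 : i ≤ m * (n - m))
    (F : R2)
    (hsupp : ∀ d ∈ F.support,
      ((d 1 : ℝ) ≤ n ∧ (d 0 : ℝ) + (d 1 : ℝ) ≤ m + n) ∧
        ¬(((m : ℝ) * ((a : ℝ) - 1) / a ≤ (d 0 : ℝ)) ∧
          ((n : ℝ) * ((a : ℝ) - 1) / a ≤ (d 1 : ℝ))))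
    (hdvd : ∀ j : ℕ, (X 0 + 1 : R2) ^
      ((( j : ℤ) - ⌊(i : ℚ) * ((n : ℚ) - m) * (1 / ((m : ℚ) * ((n : ℚ) - m)))⌋).toNat) ∣
        comp01 F j) :
    ∀ d ∈ F.support,
      (d 1 : ℚ) < (⌊(i : ℚ) * ((n : ℚ) - m) * (1 / ((m : ℚ) * ((n : ℚ) - m)))⌋ : ℚ)
        + m - (m : ℚ) / a := by
  intro d hd
  by_contra hlt
  push_neg at hlt
  obtain ⟨s, hs⟩ := ham
  obtain ⟨u, hu⟩ := han
  have haN : 0 < a := lt_of_lt_of_le (by norm_num) ha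
  have ha1 : 1 ≤ a := haN
  have ha0 : (0:ℚ) < (a:ℚ) := by exact_mod_cast haN
  have ha0' : (a:ℚ) ≠ 0 := ne_of_gt ha0
  have ha1q : (1:ℚ) ≤ (a:ℚ) := by exact_mod_cast ha1
  have hmq : (m:ℚ) = a * s := by exact_mod_cast hs
  have hnq : (n:ℚ) = a * u := by exact_mod_cast hu
  have hmnq : (m:ℚ) < n := by exact_mod_cast hmn
  have hm0 : (0:ℚ) < m := by exact_mod_cast hm
  set k := ⌊(i : ℚ) * ((n : ℚ) - m) * (1 / ((m : ℚ) * ((n : ℚ) - m)))⌋ with hk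
  have hkval : k = ⌊(i:ℚ) / m⌋ := by
    rw [hk]
    congr 1
    have h1 : (n:ℚ) - m ≠ 0 := by linarith
    field_simp
  push_cast [Nat.cast_sub hmn.le, Nat.cast_sub ha1] at hi1
  -- hi1 : (m:ℚ) * ((n:ℚ) - m) * ((a:ℚ) - 1) / a ≤ i
  have hklb : ((u:ℤ) - s) * ((a:ℤ) - 1) ≤ k := by
    rw [hkval]
    apply Int.le_floor.2
    push_cast
    rw [le_div_iff₀ hm0]
    rw [div_le_iff₀ ha0] at hi1
    rw [hmq, hnq] at hi1
    rw [hmq]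
    nlinarith [hi1, ha0]
  have hma : (m:ℚ) / a = s := by rw [hmq]; field_simp
  have hd1k : (k:ℚ) + (s:ℚ) * ((a:ℚ)-1) ≤ (d 1 : ℚ) := by
    have hms : (m:ℚ) - (m:ℚ)/a = (s:ℚ)*((a:ℚ)-1) := by rw [hma, hmq]; ring
    linarith [hlt]
  have hs1 : (0:ℚ) ≤ (s:ℚ) * ((a:ℚ)-1) :=
    mul_nonneg (Nat.cast_nonneg s) (by linarith)
  have hkd : k ≤ (d 1 : ℤ) := by
    have : (k:ℚ) ≤ ((d 1 : ℕ) : ℚ) := by linarith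
    exact_mod_cast this
  have hetoNat : ((((d 1 : ℤ) - k).toNat : ℤ)) = (d 1 : ℤ) - k :=
    Int.toNat_of_nonneg (by omega)
  have heQ : ((((d 1 : ℤ) - k).toNat : ℚ)) = ((d 1 : ℕ) : ℚ) - k := by
    have h2 : ((((d 1 : ℤ) - k).toNat : ℤ) : ℚ) = (((d 1 : ℤ) - k : ℤ) : ℚ) := by
      rw [hetoNat]
    push_cast at h2
    exact h2
  obtain ⟨d', hd'F, hd'j, hd'e⟩ :=
    key18 F (d 1) (((d 1 : ℤ) - k).toNat) (hdvd (d 1)) d hd rfl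
  have hd'0q : (s:ℚ) * ((a:ℚ)-1) ≤ (d' 0 : ℚ) := by
    have he1 : ((((d 1 : ℤ) - k).toNat : ℚ)) ≤ ((d' 0 : ℕ) : ℚ) := by exact_mod_cast hd'e
    rw [heQ] at he1
    linarith [hd1k]
  have hd'1q : (u:ℚ) * ((a:ℚ)-1) ≤ (d' 1 : ℚ) := by
    have hklbq : ((u:ℚ) - s) * ((a:ℚ)-1) ≤ (k:ℚ) := by exact_mod_cast hklb
    have hjq : ((d' 1 : ℕ) : ℚ) = ((d 1 : ℕ) : ℚ) := by rw [hd'j]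
    rw [hjq]
    have expand : (u:ℚ)*((a:ℚ)-1) = ((u:ℚ)-s)*((a:ℚ)-1) + (s:ℚ)*((a:ℚ)-1) := by ring
    linarith [hd1k]
  obtain ⟨-, hno⟩ := hsupp d' hd'F
  apply hno
  constructor
  · have hq1 : (m:ℚ) * ((a:ℚ)-1) / a ≤ ((d' 0 : ℕ) : ℚ) := by
      have hmaq : (m:ℚ)*((a:ℚ)-1)/a = (s:ℚ)*((a:ℚ)-1) := by
        rw [hmq]; field_simp
      rw [hmaq]; exact hd'0q
    have := (Rat.cast_le (K := ℝ)).2 hq1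
    push_cast at this
    exact this
  · have hq2 : (n:ℚ) * ((a:ℚ)-1) / a ≤ ((d' 1 : ℕ) : ℚ) := by
      have hnaq : (n:ℚ)*((a:ℚ)-1)/a = (u:ℚ)*((a:ℚ)-1) := by
        rw [hnq]; field_simp
      rw [hnaq]; exact hd'1q
    have := (Rat.cast_le (K := ℝ)).2 hq2
    push_cast at this
    exact this
end
end
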